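/- Let n = 2m, let t be a positive integer, let d = gcd(t, n), and let λ ∈ F_{2^n} be nonzero. Then the Gold function g(x) = Tr(λ x^{2^t+1}) is bent on F_{2^n} if and only if n/d is even and λ ∉ S, where S = { x^{2^t+1} : x ∈ F_{2^n} }. -/

import Mathlib

noncomputable section

noncomputable instance (n : ℕ) : Fintype (GaloisField 2 n) := Fintype.ofFinite _

/-- `(-1)^c` for `c ∈ F_2`. -/
def sgn (c : ZMod 2) : ℤ := if c = 0 then 1 else -1

/-- The absolute trace `Tr : F_{2^n} → F_2`. -/
def Tr {n : ℕ} (x : GaloisField 2 n) : ZMod 2 :=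
  Algebra.trace (ZMod 2) (GaloisField 2 n) x

/-- Walsh–Hadamard transform of a Boolean function on `F_{2^n}`. -/
def walsh {n : ℕ} (f : GaloisField 2 n → ZMod 2) (μ : GaloisField 2 n) : ℤ :=
  ∑ x : GaloisField 2 n, sgn (f x + Tr (μ * x))

/-- `f` is bent (where `n = 2m`): all Walsh coefficients are `±2^m`. -/
def IsBent {n : ℕ} (m : ℕ) (f : GaloisField 2 n → ZMod 2) : Prop :=
  ∀ μ, walsh f μ = 2 ^ m ∨ walsh f μ = -(2 ^ m)

/-- `fs` is the dual of the bent function `f` (where `n = 2m`). -/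
def IsDualOf {n : ℕ} (m : ℕ) (fs f : GaloisField 2 n → ZMod 2) : Prop :=
  ∀ μ, walsh f μ = 2 ^ m * sgn (fs μ)

/-!
The Gold function `g(x) = Tr(λ x^{2^t+1})` is a quadratic form over `F₂`: its polar form is
`g(x + a) + g(x) + g(a) = Tr(ℓ(a) x^{2^t})` with `ℓ(a) = λ a + λ^{2^t} a^{2^{2t}}`. Squaring a
Walsh coefficient and summing the resulting additive characters gives
`W(μ)² = 2ⁿ ∑_{a ∈ ker ℓ} (-1)^{g(a) + Tr(μ a)}`, and `g` is additive on `ker ℓ`; hence `g` is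
bent iff `ker ℓ = 0`. For `a ≠ 0`, `ℓ(a) = 0` says exactly that `u = λ a^{2^t+1}` is fixed by
`x ↦ x^{2^t}`, and such a `u` is `w^{2^t+1} = w²` for its square root `w`; so `ker ℓ ≠ 0` iff `λ`
is a `(2^t+1)`-th power. Finally, if `n / gcd(t, n)` is odd, then `z^{2^t+1} = 1` forces `z` to be
fixed by `x ↦ x^{2^{gcd(2t, n)}} = x^{2^{gcd(t, n)}}`, hence by `x ↦ x^{2^t}`, so `z² = 1` and
`z = 1`: every element is a `(2^t+1)`-th power.
-/

open Finset Function

open scoped Classical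

section SignSums

variable {G : Type*} [AddCommGroup G] [Fintype G]

lemma sgn_zero : sgn 0 = 1 := rfl

lemma sgn_add (a b : ZMod 2) : sgn (a + b) = sgn a * sgn b := by
  decide +revert

lemma sgn_eq_one_iff (c : ZMod 2) : sgn c = 1 ↔ c = 0 := by
  decide +revert

lemma intCast_sgn (c : ZMod 2) : ((sgn c : ℤ) : ZMod 2) = 1 := by
  decide +revert

def AddMonoidHom.signChar (φ : G →+ ZMod 2) : AddChar G ℤ where
  toFun x := sgn (φ x)
  map_zero_eq_one' := by rw [map_zero, sgn_eq_one_iff]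
  map_add_eq_mul' a b := by rw [map_add, sgn_add]

lemma sum_sgn_addMonoidHom (φ : G →+ ZMod 2) :
    ∑ x, sgn (φ x) = if φ = 0 then (Fintype.card G : ℤ) else 0 := by
  have hφ : φ.signChar = 0 ↔ φ = 0 := by
    simp only [DFunLike.ext_iff, AddChar.zero_apply, AddMonoidHom.zero_apply]
    exact forall_congr' fun x => sgn_eq_one_iff (φ x)
  exact φ.signChar.sum_eq_ite.trans (if_congr hφ rfl rfl)

end SignSums

section Trace

variable {n : ℕ}

lemma card_galoisField_two (hn : n ≠ 0) : Fintype.card (GaloisField 2 n) = 2 ^ n := by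
  rw [← Nat.card_eq_fintype_card, GaloisField.card 2 n hn]

lemma pow_two_pow_eq_self (hn : n ≠ 0) (x : GaloisField 2 n) : x ^ 2 ^ n = x := by
  simpa only [card_galoisField_two hn] using FiniteField.pow_card x

lemma Tr_zero : Tr (0 : GaloisField 2 n) = 0 :=
  map_zero _

lemma Tr_add (x y : GaloisField 2 n) : Tr (x + y) = Tr x + Tr y :=
  map_add _ x y

lemma Tr_pow_two_pow (k : ℕ) (x : GaloisField 2 n) : Tr (x ^ 2 ^ k) = Tr x := by
  have h := Algebra.trace_eq_of_algEquiv
    (FiniteField.frobeniusAlgEquivOfAlgebraic (ZMod 2) (GaloisField 2 n) ^ k) x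
  rwa [AlgEquiv.coe_pow, FiniteField.coe_frobeniusAlgEquivOfAlgebraic_iterate, ZMod.card] at h

lemma sum_sgn_Tr_mul_pow_two_pow (c : GaloisField 2 n) (t : ℕ) :
    ∑ x, sgn (Tr (c * x ^ 2 ^ t)) =
      if c = 0 then (Fintype.card (GaloisField 2 n) : ℤ) else 0 := by
  let φ : GaloisField 2 n →+ ZMod 2 :=
    (Algebra.trace (ZMod 2) (GaloisField 2 n)).toAddMonoidHom.comp
      ((AddMonoidHom.mulLeft c).comp (iterateFrobenius (GaloisField 2 n) 2 t).toAddMonoidHom)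
  have hφ : φ = 0 ↔ c = 0 := by
    refine ⟨fun h => ?_, fun h => by ext x; simp [φ, h]⟩
    refine (traceForm_nondegenerate (ZMod 2) (GaloisField 2 n)).1 c fun y => ?_
    obtain ⟨x, rfl⟩ := (bijective_iterateFrobenius (GaloisField 2 n) 2 t).2 y
    simpa [φ] using DFunLike.congr_fun h x
  exact (sum_sgn_addMonoidHom φ).trans (if_congr hφ rfl rfl)

end Trace

lemma walsh_mul_self {n : ℕ} (f : GaloisField 2 n → ZMod 2) (μ : GaloisField 2 n) :
    walsh f μ * walsh f μ = ∑ a, ∑ x, sgn (f x + f (x + a) + Tr (μ * a)) := by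
  rw [walsh, sum_mul_sum]
  conv_rhs => rw [sum_comm]
  refine sum_congr rfl fun x _ => ?_
  rw [← Equiv.sum_comp (Equiv.addLeft x)]
  refine sum_congr rfl fun a _ => ?_
  rw [Equiv.coe_addLeft, ← sgn_add, mul_add, Tr_add]
  congr 1
  linear_combination CharTwo.add_self_eq_zero (Tr (μ * x))

section Gold

variable {n : ℕ} (lam : GaloisField 2 n) (t : ℕ)

def gold (x : GaloisField 2 n) : ZMod 2 :=
  Tr (lam * x ^ (2 ^ t + 1))

lemma gold_zero : gold lam t 0 = 0 := by
  rw [gold, zero_pow (Nat.succ_ne_zero _), mul_zero, Tr_zero]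

def goldLinearized : GaloisField 2 n →+ GaloisField 2 n where
  toFun a := lam * a + lam ^ 2 ^ t * a ^ 2 ^ (2 * t)
  map_zero' := by simp
  map_add' a b := by simp only [add_pow_char_pow]; ring

lemma gold_add (x a : GaloisField 2 n) :
    gold lam t (x + a) = gold lam t x + gold lam t a + Tr (goldLinearized lam t a * x ^ 2 ^ t) := by
  have expand : lam * (x + a) ^ (2 ^ t + 1) = lam * x ^ (2 ^ t + 1) + lam * a ^ (2 ^ t + 1) +
      (lam * a * x ^ 2 ^ t + lam * a ^ 2 ^ t * x) := by
    rw [pow_succ, add_pow_char_pow]; ring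
  have cross : Tr (lam * a ^ 2 ^ t * x) = Tr (lam ^ 2 ^ t * a ^ 2 ^ (2 * t) * x ^ 2 ^ t) := by
    rw [← Tr_pow_two_pow t]; ring_nf
  simp only [gold, goldLinearized, AddMonoidHom.coe_mk, ZeroHom.coe_mk, expand, Tr_add, add_mul,
    cross]

lemma gold_add_of_mem_ker {a : GaloisField 2 n} (ha : a ∈ (goldLinearized lam t).ker)
    (x : GaloisField 2 n) : gold lam t (x + a) = gold lam t x + gold lam t a := by
  rw [gold_add, AddMonoidHom.mem_ker.1 ha, zero_mul, Tr_zero, add_zero]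

lemma walsh_gold_mul_self (μ : GaloisField 2 n) :
    walsh (gold lam t) μ * walsh (gold lam t) μ = Fintype.card (GaloisField 2 n) *
      ∑ a : (goldLinearized lam t).ker, sgn (gold lam t a + Tr (μ * (a : GaloisField 2 n))) := by
  calc walsh (gold lam t) μ * walsh (gold lam t) μ
      = ∑ a, sgn (gold lam t a + Tr (μ * a)) *
          ∑ x, sgn (Tr (goldLinearized lam t a * x ^ 2 ^ t)) := by
        rw [walsh_mul_self]
        refine sum_congr rfl fun a _ => ?_
        rw [mul_sum]
        refine sum_congr rfl fun x _ => ?_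
        rw [← sgn_add, gold_add]
        congr 1
        linear_combination CharTwo.add_self_eq_zero (gold lam t x)
    _ = ∑ a ∈ univ.filter (· ∈ (goldLinearized lam t).ker),
          Fintype.card (GaloisField 2 n) * sgn (gold lam t a + Tr (μ * a)) := by
        rw [sum_filter]
        refine sum_congr rfl fun a _ => ?_
        simp only [sum_sgn_Tr_mul_pow_two_pow, AddMonoidHom.mem_ker]
        split_ifs <;> ring
    _ = _ := by
        rw [← mul_sum, sum_subtype (p := (· ∈ (goldLinearized lam t).ker)) _ (by simp)]

end Gold

lemma isBent_gold_iff {n m : ℕ} (hn : n = 2 * m) (hm : 0 < m) (lam : GaloisField 2 n) (t : ℕ) :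
    IsBent m (gold lam t) ↔ (goldLinearized lam t).ker = ⊥ := by
  have hcard : (Fintype.card (GaloisField 2 n) : ℤ) = 2 ^ m * 2 ^ m := by
    rw [card_galoisField_two (by omega), hn]; push_cast; ring
  constructor
  · intro hbent
    have hW : walsh (gold lam t) 0 * walsh (gold lam t) 0 = 2 ^ m * 2 ^ m := by
      rcases hbent 0 with h | h <;> simp only [h, neg_mul_neg]
    rw [walsh_gold_mul_self, hcard] at hW
    simp only [zero_mul, Tr_zero, add_zero] at hW
    let φ : (goldLinearized lam t).ker →+ ZMod 2 :=
      AddMonoidHom.mk' (fun a => gold lam t a) fun a b => gold_add_of_mem_ker lam t b.2 a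
    have hsum : ∑ a, sgn (φ a) = 1 := mul_left_cancel₀ (by positivity) (hW.trans (mul_one _).symm)
    rw [sum_sgn_addMonoidHom] at hsum
    refine AddSubgroup.eq_bot_of_card_eq _ ?_
    split_ifs at hsum
    · rw [Nat.card_eq_fintype_card]; exact_mod_cast hsum
    · omega
  · intro hker μ
    have : Subsingleton (goldLinearized lam t).ker := by
      rw [hker]; infer_instance
    have hW := walsh_gold_mul_self lam t μ
    rw [Fintype.sum_subsingleton _ 0, ZeroMemClass.coe_zero, gold_zero, mul_zero, Tr_zero,
      add_zero, sgn_zero, mul_one, hcard] at hW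
    exact mul_self_eq_mul_self_iff.1 hW

lemma exists_pow_two_pow_add_one_eq {K : Type*} [CommSemiring K] [ExpChar K 2] [PerfectRing K 2]
    {t : ℕ} {u : K} (hu : u ^ 2 ^ t = u) : ∃ w : K, w ^ (2 ^ t + 1) = u := by
  obtain ⟨w, rfl⟩ := surjective_frobenius K 2 u
  refine ⟨w, ?_⟩
  have hw : w ^ 2 ^ t = w := by
    apply injective_frobenius K 2
    rw [frobenius_def, frobenius_def, ← pow_mul, mul_comm, pow_mul]
    exact hu
  rw [pow_succ, hw, frobenius_def, sq]

section Radical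

variable {n : ℕ} {lam : GaloisField 2 n} {t : ℕ}

lemma goldLinearized_eq_zero_iff {a : GaloisField 2 n} (ha : a ≠ 0) :
    goldLinearized lam t a = 0 ↔ (lam * a ^ (2 ^ t + 1)) ^ 2 ^ t = lam * a ^ (2 ^ t + 1) := by
  have hsq : (lam * a ^ (2 ^ t + 1)) ^ 2 ^ t = lam ^ 2 ^ t * a ^ 2 ^ (2 * t) * a ^ 2 ^ t := by
    ring
  have hlin : lam * a ^ (2 ^ t + 1) = lam * a * a ^ 2 ^ t := by ring
  rw [hsq, hlin, mul_left_inj' (pow_ne_zero _ ha)]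
  exact CharTwo.add_eq_zero.trans eq_comm

lemma mem_range_pow_iff_exists_goldLinearized_eq_zero (hlam : lam ≠ 0) :
    lam ∈ Set.range (fun x : GaloisField 2 n => x ^ (2 ^ t + 1)) ↔
      ∃ a ≠ 0, goldLinearized lam t a = 0 := by
  constructor
  · rintro ⟨b, rfl⟩
    have hb : b ≠ 0 := by rintro rfl; simp at hlam
    refine ⟨b⁻¹, inv_ne_zero hb, (goldLinearized_eq_zero_iff (inv_ne_zero hb)).2 ?_⟩
    rw [← mul_pow, mul_inv_cancel₀ hb, one_pow, one_pow]
  · rintro ⟨a, ha, hℓ⟩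
    obtain ⟨w, hw⟩ := exists_pow_two_pow_add_one_eq ((goldLinearized_eq_zero_iff ha).1 hℓ)
    refine ⟨w * a⁻¹, ?_⟩
    simp only [mul_pow, hw, inv_pow]
    field_simp

lemma ker_goldLinearized_eq_bot_iff (hlam : lam ≠ 0) :
    (goldLinearized lam t).ker = ⊥ ↔
      lam ∉ Set.range (fun x : GaloisField 2 n => x ^ (2 ^ t + 1)) := by
  simp only [mem_range_pow_iff_exists_goldLinearized_eq_zero hlam, AddSubgroup.eq_bot_iff_forall,
    AddMonoidHom.mem_ker]
  push Not
  exact forall_congr' fun _ => not_imp_not.symm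

end Radical

lemma Nat.gcd_two_mul_of_odd_div_gcd {t n : ℕ} (h : Odd (n / t.gcd n)) :
    (2 * t).gcd n = t.gcd n := by
  have hd : 0 < t.gcd n := Nat.pos_of_ne_zero fun h0 => by simp [h0] at h
  have hcop : (2 * (t / t.gcd n)).gcd (n / t.gcd n) = 1 := by
    rw [Nat.Coprime.gcd_mul_left_cancel _ (Nat.coprime_two_left.2 h)]
    exact Nat.coprime_div_gcd_div_gcd hd
  calc (2 * t).gcd n = (t.gcd n * (2 * (t / t.gcd n))).gcd (t.gcd n * (n / t.gcd n)) := by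
        rw [mul_left_comm, Nat.mul_div_cancel' (Nat.gcd_dvd_left t n),
          Nat.mul_div_cancel' (Nat.gcd_dvd_right t n)]
    _ = t.gcd n := by rw [Nat.gcd_mul_left, hcop, mul_one]

lemma isPeriodicPt_frobenius_iff {R : Type*} [CommSemiring R] {p : ℕ} [ExpChar R p] {k : ℕ}
    {x : R} : IsPeriodicPt (frobenius R p) k x ↔ x ^ p ^ k = x := by
  rw [IsPeriodicPt, IsFixedPt, iterate_frobenius]

lemma eq_one_of_pow_two_pow_add_one_eq_one {n t : ℕ} (hn : n ≠ 0) (hodd : Odd (n / t.gcd n))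
    {z : GaloisField 2 n} (hz : z ^ (2 ^ t + 1) = 1) : z = 1 := by
  have hz0 : z ≠ 0 := by rintro rfl; simp at hz
  have h2t : z ^ 2 ^ (2 * t) = z := by
    refine mul_right_cancel₀ (pow_ne_zero (2 ^ t) hz0) ?_
    calc z ^ 2 ^ (2 * t) * z ^ 2 ^ t = (z ^ (2 ^ t + 1)) ^ 2 ^ t := by ring
      _ = z * z ^ 2 ^ t := by rw [hz, one_pow, ← hz]; ring
  have hd : IsPeriodicPt (frobenius _ 2) (t.gcd n) z := by
    rw [← Nat.gcd_two_mul_of_odd_div_gcd hodd]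
    exact (isPeriodicPt_frobenius_iff.2 h2t).gcd
      (isPeriodicPt_frobenius_iff.2 (pow_two_pow_eq_self hn z))
  have ht : z ^ 2 ^ t = z := by
    obtain ⟨k, hk⟩ := Nat.gcd_dvd_left t n
    rw [← isPeriodicPt_frobenius_iff, hk]
    exact hd.mul_const k
  apply injective_frobenius _ 2
  rw [frobenius_def, frobenius_def, one_pow, ← hz, pow_succ _ (2 ^ t), ht, sq]

lemma pow_two_pow_add_one_injective {n t : ℕ} (hn : n ≠ 0) (hodd : Odd (n / t.gcd n)) :
    Injective fun x : GaloisField 2 n => x ^ (2 ^ t + 1) := by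
  intro x y (hxy : x ^ (2 ^ t + 1) = y ^ (2 ^ t + 1))
  rcases eq_or_ne y 0 with rfl | hy
  · simpa using hxy
  rw [← div_eq_one_iff_eq hy]
  refine eq_one_of_pow_two_pow_add_one_eq_one hn hodd ?_
  rw [div_pow, hxy, div_self (pow_ne_zero _ hy)]

lemma even_div_gcd_of_not_mem_range {n t : ℕ} (hn : n ≠ 0) {lam : GaloisField 2 n}
    (h : lam ∉ Set.range (fun x : GaloisField 2 n => x ^ (2 ^ t + 1))) : Even (n / t.gcd n) := by
  by_contra hodd
  exact h (Finite.surjective_of_injective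
    (pow_two_pow_add_one_injective hn (Nat.not_even_iff_odd.1 hodd)) lam)

lemma even_walsh {n : ℕ} (f : GaloisField 2 n → ZMod 2) (μ : GaloisField 2 n) :
    Even (walsh f μ) := by
  rw [← ZMod.intCast_eq_zero_iff_even, walsh]
  push_cast
  simp only [intCast_sgn, sum_const, card_univ, nsmul_eq_mul, mul_one]
  exact ZMod.natCast_eq_zero_iff_even.2
    (Nat.even_iff.2 (FiniteField.even_card_of_char_two (ringChar.eq _ 2)))

lemma not_isBent_zero {n : ℕ} (f : GaloisField 2 n → ZMod 2) : ¬ IsBent 0 f := by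
  intro h
  have := even_walsh f 0
  rcases h 0 with h | h <;> rw [h] at this <;> norm_num at this

lemma GaloisField.eq_one_of_ne_zero {x : GaloisField 2 0} (hx : x ≠ 0) : x = 1 := by
  have hroots : (Polynomial.X ^ 2 ^ 0 - Polynomial.X : Polynomial (ZMod 2)).rootSet
      (GaloisField 2 0) = ∅ := by
    rw [pow_zero, pow_one, sub_self, Polynomial.rootSet_zero]
  have hbot : (⊥ : Subalgebra (ZMod 2) (GaloisField 2 0)) = ⊤ := by
    rw [← Algebra.adjoin_empty, ← hroots]
    exact Polynomial.SplittingField.adjoin_rootSet _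
  obtain ⟨c, rfl⟩ := Algebra.mem_bot.1 (hbot ▸ Algebra.mem_top : x ∈ (⊥ : Subalgebra (ZMod 2) _))
  obtain rfl : c = 1 :=
    (by decide : ∀ c : ZMod 2, c ≠ 0 → c = 1) c fun h => hx (by rw [h, map_zero])
  exact map_one _

theorem statement11_general {n m : ℕ} (hn : n = 2 * m) (t : ℕ)
    (lam : GaloisField 2 n) (hlam : lam ≠ 0) :
    IsBent m (fun x => Tr (lam * x ^ (2 ^ t + 1))) ↔
      Even (n / Nat.gcd t n) ∧
        lam ∉ Set.range (fun x : GaloisField 2 n => x ^ (2 ^ t + 1)) := by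
  rcases Nat.eq_zero_or_pos m with rfl | hm
  · obtain rfl : n = 0 := hn
    simp only [not_isBent_zero, false_iff, not_and, not_not]
    exact fun _ => ⟨1, (one_pow _).trans (GaloisField.eq_one_of_ne_zero hlam).symm⟩
  change IsBent m (gold lam t) ↔ _
  rw [isBent_gold_iff hn hm, ker_goldLinearized_eq_bot_iff hlam]
  exact ⟨fun h => ⟨even_div_gcd_of_not_mem_range (by omega) h, h⟩, And.right⟩

/-- Gold function bentness: `g(x) = Tr(λ x^{2^t+1})` is bent iff `n / gcd(t,n)` is even and
`λ ∉ S = {x^{2^t+1} : x ∈ F_{2^n}}`. -/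
theorem statement11 {n m : ℕ} (hn : n = 2 * m) (t : ℕ) (ht : 0 < t)
    (lam : GaloisField 2 n) (hlam : lam ≠ 0) :
    IsBent m (fun x => Tr (lam * x ^ (2 ^ t + 1))) ↔
      Even (n / Nat.gcd t n) ∧
        lam ∉ Set.range (fun x : GaloisField 2 n => x ^ (2 ^ t + 1)) :=
  statement11_general hn t lam hlam
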